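/- arXiv:1901.00860 — 4 statements merged into one kernel-verified Lean document; each statement's English description precedes it below -/
import Mathlib

section
/- Every zero-monotone game v equals the pointwise supremum of the games v^B over all nonempty B ⊆ N, where v^B = v(B)·u_B + (v(N) - v(B))·u_N. -/
open Finset

def unanimity {N : Type*} [DecidableEq N] (A B : Finset N) : ℝ := if A ⊆ B then 1 else 0

def gameB {N : Type*} [Fintype N] [DecidableEq N] (v : Finset N → ℝ) (B A : Finset N) : ℝ :=
  v B * unanimity B A + (v univ - v B) * unanimity univ A

theorem stmt7 {N : Type*} [Fintype N] [DecidableEq N] [Nonempty N]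
    (v : Finset N → ℝ) (hv : v ∅ = 0)
    (hzn : ∀ i : N, v {i} = 0)
    (hmono : ∀ A B : Finset N, A ⊆ B → v A ≤ v B) :
    v = fun A =>
      ((univ : Finset N).powerset.filter Finset.Nonempty).sup'
        ⟨{Classical.arbitrary N}, by simp⟩ (fun B => gameB v B A) := by
  funext A
  have h0 : ∀ B : Finset N, (0:ℝ) ≤ v B := by
    intro B
    have := hmono ∅ B (empty_subset B)
    linarith
  apply le_antisymm
  · by_cases hA : A.Nonempty
    · apply le_sup'_of_le _ (b := A) (by simp [mem_filter, hA])
      unfold gameB unanimity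
      rcases eq_or_ne A univ with rfl | hne
      · simp
      · have : ¬ (univ : Finset N) ⊆ A := fun h => hne ((univ_subset_iff.mp h))
        simp [this]
    · rw [not_nonempty_iff_eq_empty] at hA
      subst hA
      rw [hv]
      apply le_sup'_of_le _ (b := {Classical.arbitrary N}) (by simp)
      unfold gameB unanimity
      have hne : ¬ (univ : Finset N) ⊆ ∅ ∨ (univ : Finset N) ⊆ ∅ := by tauto
      rcases eq_or_ne (univ : Finset N) ∅ with h | h
      · simp [h, hzn]
        have := hzn (Classical.arbitrary N)
        nlinarith [h0 (univ : Finset N)]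
      · have : ¬ (univ : Finset N) ⊆ ∅ := fun hh => h (subset_empty.mp hh)
        simp [this, hzn, singleton_subset_iff]
  · apply sup'_le
    intro B hB
    unfold gameB unanimity
    rcases eq_or_ne A univ with rfl | hne
    · simp only [subset_univ, if_pos]
      have : v B * 1 + (v univ - v B) * 1 = v univ := by ring
      linarith [this]
    · have hu : ¬ (univ : Finset N) ⊆ A := fun h => hne ((univ_subset_iff.mp h))
      simp only [hu, if_neg, not_false_iff, mul_zero, add_zero]
      by_cases hBA : B ⊆ A
      · simp [hBA]; exact hmono B A hBA
      · simp [hBA, h0 A]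
end

section
/- For every zero-monotone game v, the core of v equals the intersection over all nonempty coalitions B ⊆ N of the cores C(v^B), where v^B = v(B)·u_B + (v(N) - v(B))·u_N. -/
open Finset

def coreGame {N : Type*} [Fintype N] [DecidableEq N] (v : Finset N → ℝ) : Set (N → ℝ) :=
  {x | ∑ i, x i = v univ ∧ ∀ A : Finset N, v A ≤ ∑ i ∈ A, x i}

/-! Below a coalition `A ≠ N` the game `v^B` is either `v B` (when `B ⊆ A`) or `0`, so a core
element of `v` dominates it by monotonicity and nonnegativity of singletons. Conversely `v^A A = v A`,
so the cores of the games `v^A` together already enforce every coalitional constraint of `v`. -/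

section

variable {N : Type*} [Fintype N] [DecidableEq N] {v : Finset N → ℝ} {x : N → ℝ}

theorem gameB_univ (v : Finset N → ℝ) (B : Finset N) : gameB v B univ = v univ := by
  simp [gameB, unanimity]

theorem gameB_self (v : Finset N → ℝ) (A : Finset N) : gameB v A A = v A := by
  by_cases hA : A = univ
  · subst hA
    exact gameB_univ v univ
  · simp [gameB, unanimity, univ_subset_iff, hA]

theorem gameB_of_ne_univ (v : Finset N → ℝ) (B : Finset N) {A : Finset N} (hA : A ≠ univ) :
    gameB v B A = if B ⊆ A then v B else 0 := by
  simp [gameB, unanimity, univ_subset_iff, hA]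

theorem sum_nonneg_of_mem_coreGame (h0 : ∀ i, 0 ≤ v {i}) (hx : x ∈ coreGame v)
    (A : Finset N) : 0 ≤ ∑ i ∈ A, x i :=
  sum_nonneg fun i _ => by simpa using (h0 i).trans (hx.2 {i})

theorem coreGame_subset_coreGame_gameB (h0 : ∀ i, 0 ≤ v {i}) (hmono : Monotone v)
    (B : Finset N) : coreGame v ⊆ coreGame (gameB v B) := by
  intro x hx
  refine ⟨by rw [gameB_univ, hx.1], fun A => ?_⟩
  by_cases hA : A = univ
  · subst hA
    rw [gameB_univ, hx.1]
  rw [gameB_of_ne_univ v B hA]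
  split_ifs with hBA
  · exact (hmono hBA).trans (hx.2 A)
  · exact sum_nonneg_of_mem_coreGame h0 hx A

theorem mem_coreGame_of_forall_mem_coreGame_gameB (hv : v ∅ = 0)
    (h : ∀ B : Finset N, B.Nonempty → x ∈ coreGame (gameB v B)) : x ∈ coreGame v := by
  have hsum : ∑ i, x i = v univ := by
    rcases (univ : Finset N).eq_empty_or_nonempty with hN | hN
    · rw [hN, sum_empty, hv]
    · rw [(h univ hN).1, gameB_univ]
  refine ⟨hsum, fun A => ?_⟩
  rcases A.eq_empty_or_nonempty with rfl | hA
  · simp [hv]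
  · simpa only [gameB_self] using (h A hA).2 A

end

theorem stmt9 {N : Type*} [Fintype N] [DecidableEq N]
    (v : Finset N → ℝ) (hv : v ∅ = 0)
    (hzn : ∀ i : N, v {i} = 0)
    (hmono : ∀ A B : Finset N, A ⊆ B → v A ≤ v B) :
    coreGame v = ⋂ B ∈ {B : Finset N | B.Nonempty}, coreGame (gameB v B) := by
  ext x
  simp only [Set.mem_iInter, Set.mem_ofPred_eq]
  exact ⟨fun hx B _ => coreGame_subset_coreGame_gameB (fun i => (hzn i).ge)
      (fun A B hAB => hmono A B hAB) B hx,
    mem_coreGame_of_forall_mem_coreGame_gameB hv⟩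
end

section
/- If a solution σ on the space of all games is nonempty-valued, superadditive, and satisfies σ(0) = {0}, then σ is single-valued and the induced map is additive: σ(v+w) = σ(v) + σ(w) as singletons. -/
open Finset Pointwise

theorem stmt14 {N : Type*} [Fintype N] [DecidableEq N]
    (σ : (Finset N → ℝ) → Set (N → ℝ))
    (hne : ∀ v : Finset N → ℝ, v ∅ = 0 → (σ v).Nonempty)
    (hsup : ∀ v w : Finset N → ℝ, v ∅ = 0 → w ∅ = 0 → σ v + σ w ⊆ σ (v + w))
    (h0 : σ (fun _ => 0) = {0}) :
    (∀ v : Finset N → ℝ, v ∅ = 0 → ∃ x : N → ℝ, σ v = {x}) ∧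
    (∀ v w : Finset N → ℝ, v ∅ = 0 → w ∅ = 0 → σ (v + w) = σ v + σ w) := by
  have hsingle : ∀ v : Finset N → ℝ, v ∅ = 0 → ∃ x : N → ℝ, σ v = {x} := by
    intro v hv
    have hnv : (fun S => -v S : Finset N → ℝ) ∅ = 0 := by simp [hv]
    obtain ⟨y, hy⟩ := hne (fun S => -v S) hnv
    obtain ⟨x, hx⟩ := hne v hv
    have heq : (v + fun S => -v S) = (fun _ => (0:ℝ)) := by funext S; simp
    have key : ∀ z : N → ℝ, z ∈ σ v → z + y = 0 := by
      intro z hz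
      have h1 : z + y ∈ σ (v + fun S => -v S) :=
        hsup v (fun S => -v S) hv hnv ⟨z, hz, y, hy, rfl⟩
      rw [heq, h0, Set.mem_singleton_iff] at h1
      exact h1
    refine ⟨x, Set.eq_singleton_iff_unique_mem.2 ⟨hx, ?_⟩⟩
    intro z hz
    have h1 := key z hz
    have h2 := key x hx
    have := h1.trans h2.symm
    exact add_right_cancel this
  refine ⟨hsingle, ?_⟩
  intro v w hv hw
  obtain ⟨x, hx⟩ := hsingle v hv
  obtain ⟨y, hy⟩ := hsingle w hw
  have hvw : (v + w) ∅ = 0 := by simp [Pi.add_apply, hv, hw]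
  obtain ⟨z, hz⟩ := hsingle (v + w) hvw
  have hmem : x + y ∈ σ (v + w) :=
    hsup v w hv hw ⟨x, by simp [hx], y, by simp [hy], rfl⟩
  rw [hz, Set.mem_singleton_iff] at hmem
  rw [hz, hx, hy, ← hmem, Set.singleton_add_singleton]
end

section
/- Let σ be a nonempty, superadditive solution on the space of all games with σ(0) = {0}, which is positive (for every nonnegative totally monotone game v, every x ∈ σ(v) has nonnegative coordinates). Then σ is single-valued and the induced map 𝒢(N) → ℝ^N is linear over ℝ. -/
/-!
Superadditivity together with `σ 0 = {0}` gives `σ v + σ (-v) ⊆ {0}`, so `σ` is single-valued and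
its selection `Φ` is additive on games. On the ray through a nonnegative totally monotone game `u`,
`t ↦ Φ (t • u)` is additive and, by positivity, monotone, hence linear. Every game is the
difference of two such games, namely the games whose Möbius transforms are the positive and the
negative part of its own; each is totally monotone by inclusion–exclusion. So `Φ` is homogeneous.
-/

open Finset Pointwise

def TotallyMonotone {N : Type*} [DecidableEq N] (v : Finset N → ℝ) : Prop :=
  ∀ (k : ℕ), 2 ≤ k → ∀ A : Fin k → Finset N,
    ∑ I ∈ ((univ : Finset (Fin k)).powerset.filter Finset.Nonempty).attach,
        (-1 : ℝ) ^ (I.1.card + 1) * v (I.1.inf' (Finset.mem_filter.mp I.2).2 A)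
      ≤ v (univ.sup A)

theorem AddMonoidHom.map_real_eq_mul_of_monotone (f : ℝ →+ ℝ) (hf : Monotone f) (c : ℝ) :
    f c = c * f 1 := by
  have hrat (q : ℚ) : f q = q * f 1 := by
    simpa [Rat.smul_def] using map_ratCast_smul f ℚ ℚ q (1 : ℝ)
  have hf1 : 0 ≤ f 1 := by simpa using hf zero_le_one
  rcases hf1.eq_or_lt with hf1 | hf1
  · obtain ⟨q, hq⟩ := exists_rat_gt c
    obtain ⟨r, hr⟩ := exists_rat_lt c
    have hle := hf hq.le
    have hge := hf hr.le
    rw [hrat, ← hf1, mul_zero] at hle hge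
    rw [← hf1, mul_zero]
    exact le_antisymm hle hge
  · rw [← div_eq_iff hf1.ne']
    apply le_antisymm
    · refine le_of_forall_lt_rat_imp_le fun q hq => ?_
      rw [div_le_iff₀ hf1, ← hrat]
      exact hf hq.le
    · refine le_of_forall_rat_lt_imp_le fun q hq => ?_
      rw [le_div_iff₀ hf1, ← hrat]
      exact hf hq.le

theorem exists_eq_sum_Iic {α 𝕜 : Type*} [Field 𝕜] [PartialOrder α] [OrderBot α]
    [LocallyFiniteOrder α] [Fintype α] [DecidableEq α] (g : α → 𝕜) :
    ∃ f : α → 𝕜, ∀ x, g x = ∑ y ∈ Iic x, f y := by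
  let F : (α → 𝕜) →ₗ[𝕜] (α → 𝕜) := LinearMap.pi fun x => ∑ y ∈ Iic x, LinearMap.proj y
  have hF (f : α → 𝕜) (x : α) : F f x = ∑ y ∈ Iic x, f y := by simp [F]
  have hinj : Function.Injective F := by
    rw [← LinearMap.ker_eq_bot, LinearMap.ker_eq_bot']
    intro f hf
    funext x
    simp [IncidenceAlgebra.moebius_inversion_bot f (F f) (fun x => hF f x) x, hf]
  obtain ⟨f, hf⟩ := LinearMap.injective_iff_surjective.mp hinj g
  exact ⟨f, fun x => by rw [← hf, hF]⟩

section Games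

variable {N : Type*} [DecidableEq N]

theorem TotallyMonotone.smul {v : Finset N → ℝ} (hv : TotallyMonotone v) {c : ℝ} (hc : 0 ≤ c) :
    TotallyMonotone (c • v) := by
  intro k hk A
  simpa only [Pi.smul_apply, smul_eq_mul, mul_left_comm _ c, ← mul_sum] using
    mul_le_mul_of_nonneg_left (hv k hk A) hc

theorem Finset.powerset_inf' {ι : Type*} {s : Finset ι} (hs : s.Nonempty) (A : ι → Finset N) :
    (s.inf' hs A).powerset = s.inf' hs (fun i => (A i).powerset) := by
  ext S
  simp [Finset.le_inf'_iff]

theorem totallyMonotone_sum_powerset {c : Finset N → ℝ} (hc : 0 ≤ c) :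
    TotallyMonotone fun A => ∑ S ∈ A.powerset, c S := by
  intro k _ A
  calc _ = ∑ S ∈ univ.biUnion fun i => (A i).powerset, c S := by
        rw [inclusion_exclusion_sum_biUnion]
        simp only [univ_eq_attach, powerset_inf', zsmul_eq_mul]
        push_cast
        rfl
    _ ≤ ∑ S ∈ (univ.sup A).powerset, c S := by
        refine sum_le_sum_of_subset_of_nonneg ?_ fun S _ _ => hc S
        exact biUnion_subset.mpr fun i _ => powerset_mono.mpr (le_sup (f := A) (mem_univ i))

theorem exists_totallyMonotone_sub [Fintype N] {v : Finset N → ℝ} (hv : v ∅ = 0) :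
    ∃ u w : Finset N → ℝ, u ∅ = 0 ∧ w ∅ = 0 ∧ TotallyMonotone u ∧ TotallyMonotone w ∧
      0 ≤ u ∧ 0 ≤ w ∧ v = u - w := by
  obtain ⟨m, hm⟩ := exists_eq_sum_Iic v
  simp only [Iic_eq_powerset] at hm
  have hm0 : m ∅ = 0 := by simpa [hv] using (hm ∅).symm
  refine ⟨fun A => ∑ S ∈ A.powerset, (m S)⁺, fun A => ∑ S ∈ A.powerset, (m S)⁻,
    by simp [hm0], by simp [hm0],
    totallyMonotone_sum_powerset fun S => posPart_nonneg _,
    totallyMonotone_sum_powerset fun S => negPart_nonneg _,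
    fun A => sum_nonneg fun S _ => posPart_nonneg _,
    fun A => sum_nonneg fun S _ => negPart_nonneg _, ?_⟩
  funext A
  simp [hm, ← sum_sub_distrib, posPart_sub_negPart]

theorem map_smul_of_totallyMonotone {Φ : (Finset N → ℝ) → N → ℝ}
    (hadd : ∀ v w, v ∅ = 0 → w ∅ = 0 → Φ (v + w) = Φ v + Φ w)
    (hpos : ∀ v, v ∅ = 0 → TotallyMonotone v → 0 ≤ v → 0 ≤ Φ v)
    {u : Finset N → ℝ} (hu : u ∅ = 0) (htm : TotallyMonotone u) (hnn : 0 ≤ u) (c : ℝ) :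
    Φ (c • u) = c • Φ u := by
  have hgame (t : ℝ) : (t • u) ∅ = 0 := by simp [hu]
  have hray (s t : ℝ) : Φ ((s + t) • u) = Φ (s • u) + Φ (t • u) := by
    rw [add_smul, hadd _ _ (hgame s) (hgame t)]
  funext i
  let f : ℝ →+ ℝ := AddMonoidHom.mk' (fun t => Φ (t • u) i) fun s t => congrFun (hray s t) i
  have hmono : Monotone f := fun s t hst => by
    have hdiff := hpos _ (hgame _) (htm.smul (sub_nonneg.mpr hst))
      (smul_nonneg (sub_nonneg.mpr hst) hnn) i
    have hsplit := congrFun (hray (t - s) s) i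
    rw [sub_add_cancel] at hsplit
    simp only [AddMonoidHom.mk'_apply, f, hsplit, Pi.add_apply, Pi.zero_apply] at hdiff ⊢
    linarith
  simpa [f] using f.map_real_eq_mul_of_monotone hmono c

theorem map_smul_of_additive_of_nonneg [Fintype N] {Φ : (Finset N → ℝ) → N → ℝ}
    (hadd : ∀ v w, v ∅ = 0 → w ∅ = 0 → Φ (v + w) = Φ v + Φ w)
    (hpos : ∀ v, v ∅ = 0 → TotallyMonotone v → 0 ≤ v → 0 ≤ Φ v)
    {v : Finset N → ℝ} (hv : v ∅ = 0) (c : ℝ) : Φ (c • v) = c • Φ v := by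
  obtain ⟨u, w, hu, hw, hut, hwt, hun, hwn, rfl⟩ := exists_totallyMonotone_sub hv
  have hcu : Φ (c • (u - w)) + Φ (c • w) = Φ (c • u) := by
    rw [← hadd _ _ (by simp [hu, hw]) (by simp [hw]), ← smul_add, sub_add_cancel]
  have hΦu : Φ (u - w) + Φ w = Φ u := by rw [← hadd _ _ (by simp [hu, hw]) hw, sub_add_cancel]
  rw [map_smul_of_totallyMonotone hadd hpos hu hut hun,
    map_smul_of_totallyMonotone hadd hpos hw hwt hwn, ← hΦu, smul_add] at hcu
  exact add_right_cancel hcu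

end Games

theorem Set.eq_singleton_neg_of_add_subset_zero {G : Type*} [AddGroup G] {s t : Set G}
    (hst : s + t ⊆ {0}) (hs : s.Nonempty) {y : G} (hy : y ∈ t) : s = {-y} :=
  Set.eq_singleton_iff_nonempty_unique_mem.mpr
    ⟨hs, fun _ hx => eq_neg_of_add_eq_zero_left (hst (Set.add_mem_add hx hy))⟩

theorem exists_eq_singleton_of_superadditive {N : Type*} {σ : (Finset N → ℝ) → Set (N → ℝ)}
    (hne : ∀ v, v ∅ = 0 → (σ v).Nonempty)
    (hsup : ∀ v w, v ∅ = 0 → w ∅ = 0 → σ v + σ w ⊆ σ (v + w))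
    (h0 : σ 0 = {0}) {v : Finset N → ℝ} (hv : v ∅ = 0) : ∃ x, σ v = {x} := by
  have hnv : (-v) ∅ = 0 := by simp [hv]
  obtain ⟨y, hy⟩ := hne (-v) hnv
  refine ⟨-y, Set.eq_singleton_neg_of_add_subset_zero ?_ (hne v hv) hy⟩
  rw [← h0, ← add_neg_cancel v]
  exact hsup v (-v) hv hnv

theorem eq_singleton_add_of_superadditive {N : Type*} {σ : (Finset N → ℝ) → Set (N → ℝ)}
    (hsup : ∀ v w, v ∅ = 0 → w ∅ = 0 → σ v + σ w ⊆ σ (v + w))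
    {v w : Finset N → ℝ} (hv : v ∅ = 0) (hw : w ∅ = 0) (hvw : ∃ z, σ (v + w) = {z})
    {x y : N → ℝ} (hx : σ v = {x}) (hy : σ w = {y}) : σ (v + w) = {x + y} := by
  obtain ⟨z, hz⟩ := hvw
  have hxy : x + y ∈ σ (v + w) := hsup v w hv hw (Set.add_mem_add (by simp [hx]) (by simp [hy]))
  rw [hz, Set.mem_singleton_iff] at hxy
  rw [hz, hxy]

theorem stmt15 {N : Type*} [Fintype N] [DecidableEq N]
    (σ : (Finset N → ℝ) → Set (N → ℝ))
    (hne : ∀ v : Finset N → ℝ, v ∅ = 0 → (σ v).Nonempty)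
    (hsup : ∀ v w : Finset N → ℝ, v ∅ = 0 → w ∅ = 0 → σ v + σ w ⊆ σ (v + w))
    (h0 : σ (fun _ => 0) = {0})
    (hpos : ∀ v : Finset N → ℝ, v ∅ = 0 → TotallyMonotone v → (∀ A, 0 ≤ v A) →
      ∀ x ∈ σ v, ∀ i : N, 0 ≤ x i) :
    (∀ v : Finset N → ℝ, v ∅ = 0 → ∃ x : N → ℝ, σ v = {x}) ∧
    (∀ v w : Finset N → ℝ, v ∅ = 0 → w ∅ = 0 → ∀ x y : N → ℝ,
      σ v = {x} → σ w = {y} → σ (v + w) = {x + y}) ∧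
    (∀ (c : ℝ) (v : Finset N → ℝ), v ∅ = 0 → ∀ x : N → ℝ,
      σ v = {x} → σ (fun A => c * v A) = {c • x}) := by
  have hsingle (v : Finset N → ℝ) (hv : v ∅ = 0) : ∃ x, σ v = {x} :=
    exists_eq_singleton_of_superadditive hne hsup h0 hv
  have hadd (v w : Finset N → ℝ) (hv : v ∅ = 0) (hw : w ∅ = 0) (x y : N → ℝ)
      (hx : σ v = {x}) (hy : σ w = {y}) : σ (v + w) = {x + y} :=
    eq_singleton_add_of_superadditive hsup hv hw (hsingle _ (by simp [hv, hw])) hx hy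
  obtain ⟨Φ, hΦ⟩ : ∃ Φ : (Finset N → ℝ) → N → ℝ, ∀ v, v ∅ = 0 → σ v = {Φ v} := by
    choose Φ hΦ using fun v => (em (v ∅ = 0)).elim
      (fun hv => (hsingle v hv).imp fun _ h _ => h) (fun hv => ⟨0, fun h => absurd h hv⟩)
    exact ⟨Φ, hΦ⟩
  have hΦadd (v w : Finset N → ℝ) (hv : v ∅ = 0) (hw : w ∅ = 0) : Φ (v + w) = Φ v + Φ w :=
    Set.singleton_injective <| by
      rw [← hΦ _ (by simp [hv, hw]), hadd v w hv hw _ _ (hΦ v hv) (hΦ w hw)]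
  have hΦpos (v : Finset N → ℝ) (hv : v ∅ = 0) (htm : TotallyMonotone v) (hnn : 0 ≤ v) :
      0 ≤ Φ v :=
    hpos v hv htm hnn _ (by simp [hΦ v hv])
  refine ⟨hsingle, hadd, fun c v hv x hx => ?_⟩
  obtain rfl : x = Φ v := Set.singleton_injective (hx.symm.trans (hΦ v hv))
  rw [← map_smul_of_additive_of_nonneg hΦadd hΦpos hv c]
  exact hΦ (c • v) (by simp [hv])
end
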